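/- Fix an alphabet Σ and a generative probabilistic system γ : X → PMF (Σ × X). Define the cone function μ : X → List Σ → ℝ≥0∞ recursively by μ x [] = 1 and μ x (a :: v) = ∑'_{x' : X} (γ x) (a, x') * μ x' v, and define iterates γ^(n) : X → PMF (List Σ × X) by γ^(0)(x) = PMF.pure ([], x) and γ^(n+1)(x) = (γ^(n)(x)).bind (fun (u, z) => (γ z).map (fun (a, z') => (u ++ [a], z'))). Then for every state x and every word v of length n, μ x v = ((γ^(n)(x)).map (fun (u, z) => u)) v; that is, the probability the system assigns to the cone of v equals the probability of the word v under the n-th iterate with state components forgotten. -/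
import Mathlib


open scoped ENNReal

open scoped Classical

/-- Iterates of a generative probabilistic system `γ : X → PMF (A × X)`. -/
noncomputable def pIter {A X : Type*} (γ : X → PMF (A × X)) :
    ℕ → X → PMF (List A × X)
  | 0 => fun x => PMF.pure ([], x)
  | n + 1 => fun x =>
      (pIter γ n x).bind fun p => (γ p.2).map fun q => (p.1 ++ [q.1], q.2)

/-- The cone function: `coneProb γ x v` is the probability that an execution from
`x` begins with the word `v`. -/
noncomputable def coneProb {A X : Type*} (γ : X → PMF (A × X)) :
    X → List A → ℝ≥0∞
  | _, [] => 1
  | x, a :: v => ∑' x' : X, (γ x) (a, x') * coneProb γ x' v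

lemma pIter_succ' {A X : Type*} (γ : X → PMF (A × X)) (n : ℕ) (x : X) :
    pIter γ (n + 1) x =
      (γ x).bind fun q => (pIter γ n q.2).map fun p => (q.1 :: p.1, p.2) := by
  induction n generalizing x with
  | zero => simp [pIter, PMF.map, PMF.bind_bind, Function.comp_def]
  | succ n ih =>
      show (pIter γ (n+1) x).bind _ = _
      rw [ih]
      simp [pIter, PMF.map, PMF.bind_bind, ih, Function.comp_def]

lemma map_cons_apply {A : Type*} (ν : PMF (List A)) (c a : A) (v : List A) :
    (ν.map (c :: ·)) (a :: v) = if c = a then ν v else 0 := by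
  rw [PMF.map_apply]
  by_cases h : c = a
  · subst h
    rw [if_pos rfl, tsum_eq_single v]
    · simp
    · intro u hu; simp [Ne.symm hu]
  · rw [if_neg h]
    apply ENNReal.tsum_eq_zero.mpr
    intro u
    simp [List.cons_eq_cons, Ne.symm h]

/-- the probability assigned to the cone of a word `v` of length `n`
equals the probability of `v` under the `n`-th iterate with states forgotten. -/
theorem stmt13 {A X : Type*} (γ : X → PMF (A × X)) (x : X) (v : List A) :
    coneProb γ x v = ((pIter γ v.length x).map fun p => p.1) v := by
  induction v generalizing x with
  | nil =>
      show (1 : ℝ≥0∞) = ((PMF.pure (([] : List A), x)).map fun p => p.1) []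
      rw [PMF.map_apply]
      symm
      rw [tsum_eq_single (([] : List A), x)]
      · simp
      · intro b hb; simp [hb]
  | cons a v ih =>
      rw [show (a :: v).length = v.length + 1 from rfl, pIter_succ']
      rw [PMF.map_bind, PMF.bind_apply]
      have key : ∀ q : A × X,
          (PMF.map (fun p => p.1)
            (PMF.map (fun p => (q.1 :: p.1, p.2)) (pIter γ v.length q.2))) (a :: v)
          = if q.1 = a then ((pIter γ v.length q.2).map fun p => p.1) v else 0 := by
        intro q
        rw [PMF.map_comp]
        have h2 : ((fun p : List A × X => p.1) ∘ fun p : List A × X => (q.1 :: p.1, p.2))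
            = (q.1 :: ·) ∘ (fun p : List A × X => p.1) := rfl
        rw [h2, ← PMF.map_comp, map_cons_apply]
      calc coneProb γ x (a :: v)
          = ∑' x' : X, (γ x) (a, x') * ((pIter γ v.length x').map fun p => p.1) v := by
            rw [show coneProb γ x (a :: v)
              = ∑' x' : X, (γ x) (a, x') * coneProb γ x' v from rfl]
            exact tsum_congr fun x' => by rw [ih]
        _ = ∑' (q : A × X), (γ x) q *
              (PMF.map (fun p => p.1)
                (PMF.map (fun p => (q.1 :: p.1, p.2)) (pIter γ v.length q.2))) (a :: v) := by
            rw [ENNReal.tsum_prod']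
            rw [tsum_eq_single a]
            · exact tsum_congr fun z => by rw [key (a, z)]; simp
            · intro b hb
              apply ENNReal.tsum_eq_zero.mpr
              intro z
              rw [key (b, z)]
              simp [hb]
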